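/- arXiv:1809.01076 — 2 statements merged into one kernel-verified Lean document; each statement's English description precedes it below -/
import Mathlib

section
/- In the space ℝⁿ with the ℓ¹-norm, two elements f and g satisfy ‖f+g‖₁ = ‖f−g‖₁ = ‖f‖₁ + ‖g‖₁ if and only if f i * g i = 0 for every coordinate i. -/
/-!
Both `|a + b|` and `|a - b|` are bounded by `|a| + |b|`, so the two ℓ¹ identities hold iff
equality holds in every coordinate. Equality in the first bound means `a` and `b` have the same
sign, in the second that they have opposite signs; both together force `a = 0` or `b = 0`.
-/

open Finset

section

variable {G : Type*} [AddCommGroup G] [LinearOrder G] [IsOrderedAddMonoid G]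

theorem abs_add_eq_and_abs_sub_eq_add_abs_iff (a b : G) :
    |a + b| = |a| + |b| ∧ |a - b| = |a| + |b| ↔ a = 0 ∨ b = 0 := by
  rw [sub_eq_add_neg, abs_add_eq_add_abs_iff, ← abs_neg b, abs_add_eq_add_abs_iff, neg_nonneg,
    neg_nonpos]
  constructor
  · rintro ⟨⟨ha, hb⟩ | ⟨ha, hb⟩, ⟨ha', hb'⟩ | ⟨ha', hb'⟩⟩ <;>
      first | exact .inl (le_antisymm ‹_› ‹_›) | exact .inr (le_antisymm ‹_› ‹_›)
  · rintro (rfl | rfl) <;> simp [le_total]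

variable {ι : Type*} {s : Finset ι} {f g : ι → G}

theorem sum_abs_add_eq_iff :
    ∑ i ∈ s, |f i + g i| = ∑ i ∈ s, |f i| + ∑ i ∈ s, |g i| ↔
      ∀ i ∈ s, |f i + g i| = |f i| + |g i| := by
  rw [← sum_add_distrib]
  exact sum_eq_sum_iff_of_le fun i _ => abs_add_le (f i) (g i)

theorem sum_abs_sub_eq_iff :
    ∑ i ∈ s, |f i - g i| = ∑ i ∈ s, |f i| + ∑ i ∈ s, |g i| ↔
      ∀ i ∈ s, |f i - g i| = |f i| + |g i| := by
  simpa only [sub_eq_add_neg, Pi.neg_apply, abs_neg] using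
    sum_abs_add_eq_iff (s := s) (f := f) (g := -g)

end

theorem l1_diamond_iff_disjoint_support {n : ℕ} (f g : Fin n → ℝ) :
    ((∑ i, |f i + g i|) = (∑ i, |f i - g i|) ∧
      (∑ i, |f i - g i|) = (∑ i, |f i|) + ∑ i, |g i|)
    ↔ ∀ i, f i * g i = 0 := by
  calc _ ↔ (∑ i, |f i + g i|) = (∑ i, |f i|) + ∑ i, |g i| ∧
          (∑ i, |f i - g i|) = (∑ i, |f i|) + ∑ i, |g i| :=
        ⟨fun h => ⟨h.1.trans h.2, h.2⟩, fun h => ⟨h.1.trans h.2.symm, h.2⟩⟩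
    _ ↔ ∀ i, |f i + g i| = |f i| + |g i| ∧ |f i - g i| = |f i| + |g i| := by
        simp only [sum_abs_add_eq_iff, sum_abs_sub_eq_iff, mem_univ, true_implies, forall_and]
    _ ↔ ∀ i, f i * g i = 0 := by
        simp only [abs_add_eq_and_abs_sub_eq_add_abs_iff, mul_eq_zero]
end

section
/- Let Z = ℝⁿ with the ℓ¹-norm and e = (ε₁, …, εₙ), εᵢ ∈ {−1,1}. Then the closed unit ball of Z equals the convex hull of F_e ∪ F_{−e}, where F_{±e} = {x : ∑ (±εᵢ) xᵢ = 1, (±εᵢ) xᵢ ≥ 0 ∀ i}; that is, e is a unitary tripotent. -/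
/-!
Every vertex `±eᵢ` of the `ℓ¹` unit ball lies in `F_e ∪ F_{-e}`, because `εᵢ · (±1) = ±1`;
conversely both faces lie in the ball, since on `F_δ` the functional `∑ δᵢ xᵢ` equals `∑ |xᵢ|`.
So the theorem reduces to the `ℓ¹` ball being the convex hull of the `±eᵢ`, which follows by writing
`x = ∑ (xᵢ⁺ + c) eᵢ + ∑ (xᵢ⁻ + c) (-eᵢ)`, the slack `c` spreading `1 - ‖x‖₁` evenly over all `2n` vertices.
-/

open Finset Set

variable {ι : Type*} [Fintype ι]

def l1UnitBall (ι : Type*) [Fintype ι] : Set (ι → ℝ) := {x | ∑ i, |x i| ≤ 1}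

def l1Face (δ : ι → ℝ) : Set (ι → ℝ) := {x | ∑ i, δ i * x i = 1 ∧ ∀ i, 0 ≤ δ i * x i}

def signedBasis [DecidableEq ι] : ι ⊕ ι → ι → ℝ :=
  Sum.elim (fun i => Pi.single i 1) (fun i => Pi.single i (-1))

theorem convex_l1UnitBall : Convex ℝ (l1UnitBall ι) := by
  intro x hx y hy a b ha hb hab
  calc ∑ i, |a * x i + b * y i|
      ≤ ∑ i, (a * |x i| + b * |y i|) := by
        gcongr with i
        calc |a * x i + b * y i| ≤ |a * x i| + |b * y i| := abs_add_le _ _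
          _ = a * |x i| + b * |y i| := by rw [abs_mul, abs_mul, abs_of_nonneg ha, abs_of_nonneg hb]
    _ = a * ∑ i, |x i| + b * ∑ i, |y i| := by rw [sum_add_distrib, mul_sum, mul_sum]
    _ ≤ a * 1 + b * 1 := by gcongr <;> assumption
    _ = 1 := by rw [mul_one, mul_one, hab]

theorem single_mem_l1UnitBall [DecidableEq ι] {i : ι} {s : ℝ} (hs : |s| = 1) :
    Pi.single i s ∈ l1UnitBall ι := by
  simp [l1UnitBall, Pi.single_apply, apply_ite, hs]

theorem l1UnitBall_subset_convexHull_signedBasis [DecidableEq ι] [Nonempty ι] :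
    l1UnitBall ι ⊆ convexHull ℝ (range signedBasis) := by
  intro x hx
  set c : ℝ := (1 - ∑ i, |x i|) / (2 * Fintype.card ι)
  have hc : 0 ≤ c := div_nonneg (sub_nonneg.2 hx) (by positivity)
  let w : ι ⊕ ι → ℝ := Sum.elim (fun i => max (x i) 0 + c) (fun i => max (-x i) 0 + c)
  have hw₀ : ∀ p, 0 ≤ w p := by
    rintro (i | i) <;> exact add_nonneg (le_max_right _ _) hc
  have hw₁ : ∑ p, w p = 1 := by
    have hpair : ∑ i, (max (x i) 0 + max (-x i) 0) = ∑ i, |x i| :=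
      sum_congr rfl fun i _ => max_zero_add_max_neg_zero_eq_abs_self (x i)
    rw [Fintype.sum_sum_type]
    simp only [w, Sum.elim_inl, Sum.elim_inr, sum_add_distrib, sum_const, card_univ,
      nsmul_eq_mul] at hpair ⊢
    have hslack : 2 * Fintype.card ι * c = 1 - ∑ i, |x i| :=
      mul_div_cancel₀ _ (by positivity)
    linarith
  have hwx : ∑ p, w p • signedBasis p = x := by
    rw [Fintype.sum_sum_type, ← sum_add_distrib]
    conv_rhs => rw [← Finset.univ_sum_single x]
    refine sum_congr rfl fun i _ => ?_
    ext j
    by_cases hj : j = i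
    · subst hj
      simp only [w, signedBasis, Sum.elim_inl, Sum.elim_inr, Pi.add_apply, Pi.smul_apply,
        Pi.single_eq_same, smul_eq_mul, mul_one, mul_neg, neg_add_rev, add_add_neg_add_cancel]
      linarith [max_zero_sub_max_neg_zero_eq_self (x j)]
    · simp [w, signedBasis, hj]
  rw [← hwx]
  exact (convex_convexHull ℝ _).sum_mem (fun p _ => hw₀ p) hw₁
    fun p _ => subset_convexHull ℝ _ (mem_range_self p)

theorem l1UnitBall_eq_convexHull_signedBasis [DecidableEq ι] [Nonempty ι] :
    l1UnitBall ι = convexHull ℝ (range signedBasis) := by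
  refine l1UnitBall_subset_convexHull_signedBasis.antisymm
    (convexHull_min ?_ convex_l1UnitBall)
  rintro _ ⟨i | i, rfl⟩ <;> exact single_mem_l1UnitBall (by simp)

theorem l1Face_subset_l1UnitBall {δ : ι → ℝ} (hδ : ∀ i, |δ i| = 1) : l1Face δ ⊆ l1UnitBall ι := by
  rintro x ⟨hsum, hnonneg⟩
  have habs : ∀ i, |x i| = δ i * x i := fun i => by
    rw [← abs_of_nonneg (hnonneg i), abs_mul, hδ, one_mul]
  simp only [l1UnitBall, mem_ofPred_eq, habs, hsum, le_refl]

theorem single_mem_l1Face [DecidableEq ι] {δ : ι → ℝ} {i : ι} {s : ℝ} (h : δ i * s = 1) :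
    Pi.single i s ∈ l1Face δ := by
  refine ⟨by simp [Pi.single_apply, h], fun j => ?_⟩
  by_cases hj : j = i
  · subst hj; simp [h]
  · simp [hj]

theorem single_mem_l1Face_union [DecidableEq ι] {δ : ι → ℝ} {i : ι} {s : ℝ}
    (hδ : |δ i| = 1) (hs : |s| = 1) : Pi.single i s ∈ l1Face δ ∪ l1Face (-δ) := by
  have : |δ i * s| = 1 := by rw [abs_mul, hδ, hs, one_mul]
  rcases abs_eq zero_le_one |>.1 this with h | h
  · exact Or.inl (single_mem_l1Face h)
  · exact Or.inr (single_mem_l1Face (by simp [h]))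

theorem l1_unit_ball_eq_convexHull_faces {n : ℕ} (hn : 0 < n)
    (ε : Fin n → ℝ) (hε : ∀ i, ε i = 1 ∨ ε i = -1) :
    {x : Fin n → ℝ | (∑ i, |x i|) ≤ 1}
      = convexHull ℝ
        ({x : Fin n → ℝ | (∑ i, ε i * x i) = 1 ∧ ∀ i, 0 ≤ ε i * x i} ∪
         {x : Fin n → ℝ | (∑ i, (-ε i) * x i) = 1 ∧ ∀ i, 0 ≤ (-ε i) * x i}) := by
  have : Nonempty (Fin n) := ⟨⟨0, hn⟩⟩
  have hε : ∀ i, |ε i| = 1 := fun i => by rcases hε i with h | h <;> simp [h]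
  change l1UnitBall (Fin n) = convexHull ℝ (l1Face ε ∪ l1Face (-ε))
  refine subset_antisymm ?_ (convexHull_min ?_ convex_l1UnitBall)
  · rw [l1UnitBall_eq_convexHull_signedBasis]
    refine convexHull_mono ?_
    rintro _ ⟨i | i, rfl⟩ <;> exact single_mem_l1Face_union (hε i) (by simp)
  · refine union_subset (l1Face_subset_l1UnitBall hε) (l1Face_subset_l1UnitBall fun i => ?_)
    simp [hε i]
end
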